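/- The function W_+(φ) = (s/3)|λ(ξφ)|³ with λ(y) = max(0,y−1)+min(0,y+1), s > 0, ξ > 0, is convex on ℝ, and the function W_−(φ) = (1/2)(1 − (ξφ)²) + δ is concave on ℝ. Hence W^s = W_+ + W_− is a splitting of the relaxed double obstacle energy into a convex and a concave part. -/

import Mathlib

noncomputable def lam (y : ℝ) : ℝ := max 0 (y - 1) + min 0 (y + 1)

noncomputable def Wplus (s ξ : ℝ) (φ : ℝ) : ℝ := (s / 3) * |lam (ξ * φ)| ^ 3

noncomputable def Wminus (ξ δ : ℝ) (φ : ℝ) : ℝ := (1 / 2) * (1 - (ξ * φ) ^ 2) + δ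

noncomputable def Ws (s ξ δ : ℝ) (y : ℝ) : ℝ :=
  (1 / 2) * (1 - (ξ * y) ^ 2) + (s / 3) * |lam (ξ * y)| ^ 3 + δ

/-!
`λ` is soft thresholding at level `1`, so `|λ(y)| = max (|y| - 1) 0` is convex and nonnegative;
hence its cube is convex, and so is `W_+`, a nonnegative multiple of it precomposed with a linear
map. `W_−` is a constant minus a nonnegative multiple of the square `(ξφ)²`.
-/

open Set

lemma abs_lam (y : ℝ) : |lam y| = max (|y| - 1) 0 := by
  unfold lam
  rcases le_total y (-1) with h | h
  · rw [max_eq_left (by linarith), min_eq_right (by linarith), abs_of_nonpos (by linarith),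
      abs_of_nonpos (by linarith), max_eq_left (by linarith)]
    ring
  rcases le_total y 1 with h' | h'
  · rw [max_eq_left (by linarith), min_eq_left (by linarith), zero_add, abs_zero,
      max_eq_right (by grind)]
  · rw [max_eq_right (by linarith), min_eq_left (by linarith), abs_of_nonneg (by linarith),
      abs_of_nonneg (by linarith), max_eq_left (by linarith), add_zero]

lemma convexOn_abs_lam : ConvexOn ℝ univ fun y => |lam y| := by
  simp only [abs_lam]
  exact ((convexOn_norm convex_univ).sub (concaveOn_const 1 convex_univ)).sup
    (convexOn_const 0 convex_univ)

lemma ConvexOn.comp_const_mul {g : ℝ → ℝ} (hg : ConvexOn ℝ univ g) (ξ : ℝ) :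
    ConvexOn ℝ univ fun x => g (ξ * x) :=
  hg.comp_linearMap (LinearMap.mulLeft ℝ ξ)

theorem convexOn_Wplus {s : ℝ} (hs : 0 ≤ s) (ξ : ℝ) : ConvexOn ℝ univ (Wplus s ξ) :=
  ((convexOn_abs_lam.comp_const_mul ξ).pow (fun _ _ => abs_nonneg _) 3).smul (by positivity)

theorem concaveOn_Wminus (ξ δ : ℝ) : ConcaveOn ℝ univ (Wminus ξ δ) :=
  (((concaveOn_const 1 convex_univ).sub ((Even.convexOn_pow even_two).comp_const_mul ξ)).smul
    (by norm_num : (0 : ℝ) ≤ 1 / 2)).add_const δ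

theorem Ws_eq_Wplus_add_Wminus (s ξ δ y : ℝ) : Ws s ξ δ y = Wplus s ξ y + Wminus ξ δ y := by
  simp only [Ws, Wplus, Wminus]
  ring

theorem Ws_splitting_general (s ξ δ : ℝ) (hs : 0 < s) :
    ConvexOn ℝ Set.univ (Wplus s ξ) ∧ ConcaveOn ℝ Set.univ (Wminus ξ δ) ∧
      ∀ y : ℝ, Ws s ξ δ y = Wplus s ξ y + Wminus ξ δ y :=
  ⟨convexOn_Wplus hs.le ξ, concaveOn_Wminus ξ δ, Ws_eq_Wplus_add_Wminus s ξ δ⟩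

/-- `W_+` is convex on ℝ, `W_−` is concave on ℝ, and
`W^s = W_+ + W_−` is a convex–concave splitting. -/
theorem Ws_splitting (s ξ δ : ℝ) (hs : 0 < s) (hξ : 0 < ξ) :
    ConvexOn ℝ Set.univ (Wplus s ξ) ∧ ConcaveOn ℝ Set.univ (Wminus ξ δ) ∧
      ∀ y : ℝ, Ws s ξ δ y = Wplus s ξ y + Wminus ξ δ y :=
  Ws_splitting_general s ξ δ hs
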